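/- If S is an additively reduced and additively Furstenberg semidomain, then S^× ⊆ A₊(S), i.e., every multiplicative unit of S is an additive atom. -/

import Mathlib

/-- Witness that `S` is a semidomain: an injective semiring hom into an integral domain. -/
structure SemidomainWitness (S : Type*) [CommSemiring S] where
  D : Type
  [commRing : CommRing D]
  [isDomain : IsDomain D]
  emb : S →+* D
  inj : Function.Injective emb

/-- `S` is a semidomain, i.e. (isomorphic to) a subsemiring of an integral domain. -/
def IsSemidomain (S : Type*) [CommSemiring S] : Prop := Nonempty (SemidomainWitness S)

/-- `S` is additively reduced: `0` is the only additively invertible element. -/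
def AddReduced (S : Type*) [AddZeroClass S] : Prop := ∀ a b : S, a + b = 0 → a = 0

/-- `s` is an atom of the additive monoid `(S, +)` (for `S` additively reduced):
it is nonzero and cannot be written as a sum of two nonzero elements. -/
def IsAddAtom {S : Type*} [AddZeroClass S] (s : S) : Prop :=
  s ≠ 0 ∧ ∀ a b : S, s = a + b → a = 0 ∨ b = 0

/-- `S` is additively Furstenberg: every nonzero element is divisible in `(S, +)`
by an additive atom. -/
def AddFurstenberg (S : Type*) [AddZeroClass S] : Prop :=
  ∀ s : S, s ≠ 0 → ∃ a t : S, IsAddAtom a ∧ s = a + t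

/-!
If a unit `u` were a sum `a + b` of two nonzero elements, then every nonzero `s` would split as
`(s u⁻¹) a + (s u⁻¹) b` into two nonzero summands, so there would be no additive atoms at all.
-/

theorem IsSemidomain.nontrivial {S : Type*} [CommSemiring S] (hS : IsSemidomain S) :
    Nontrivial S :=
  let ⟨W⟩ := hS
  letI := W.commRing
  haveI := W.isDomain
  W.emb.domain_nontrivial

theorem IsSemidomain.noZeroDivisors {S : Type*} [CommSemiring S] (hS : IsSemidomain S) :
    NoZeroDivisors S :=
  let ⟨W⟩ := hS
  letI := W.commRing
  haveI := W.isDomain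
  W.inj.noZeroDivisors W.emb (map_zero _) (map_mul _)

theorem IsAddAtom.isAddAtom_of_isUnit {S : Type*} [Semiring S] [NoZeroDivisors S] {p u : S}
    (hp : IsAddAtom p) (hu : IsUnit u) : IsAddAtom u := by
  obtain ⟨u, rfl⟩ := hu
  have hpu : p * ↑u⁻¹ ≠ 0 := (Units.mul_left_eq_zero u⁻¹).not.mpr hp.1
  refine ⟨fun hu0 => hp.1 ?_, fun a b hab => ?_⟩
  · rw [← Units.mul_inv_cancel_right p u, hu0, mul_zero, zero_mul]
  · have hsplit : p = p * ↑u⁻¹ * a + p * ↑u⁻¹ * b := by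
      rw [← mul_add, ← hab, Units.inv_mul_cancel_right]
    have cancel {x : S} (h : p * ↑u⁻¹ * x = 0) : x = 0 := (mul_eq_zero.mp h).resolve_left hpu
    exact (hp.2 _ _ hsplit).imp cancel cancel

/-- In an additively reduced and additively Furstenberg semidomain, every multiplicative
unit is an additive atom. -/
theorem isAddAtom_of_isUnit
    {S : Type*} [CommSemiring S]
    (hS : IsSemidomain S) (hfur : AddFurstenberg S)
    (u : S) (hu : IsUnit u) : IsAddAtom u := by
  have := hS.nontrivial
  have := hS.noZeroDivisors
  obtain ⟨p, -, hp, -⟩ := hfur 1 one_ne_zero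
  exact hp.isAddAtom_of_isUnit hu
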